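/- Let S ⊆ Z^n be an integrally convex set admitting a dec-min element, let B° = [a,b]_Z be the smallest integral box containing decmin(S), let φ satisfy the rapid increase condition φ(k+1) ≥ n·φ(k) > 0, and set p_i = φ(a_i+1) − φ(a_i). Then decmin(S) = argmin{ ⟨p, y⟩ : y ∈ S ∩ B° }. -/
import Mathlib


open Finset

/-- Descending rearrangement of a tuple. -/
noncomputable def sortDesc {n : ℕ} {α : Type*} [LinearOrder α] (x : Fin n → α) : Fin n → α :=
  x ∘ (Tuple.sort (fun i => OrderDual.toDual (x i)))

/-- `x <_dec y` : strict lexicographic comparison of descending rearrangements. -/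
noncomputable def decLT {n : ℕ} {α : Type*} [LinearOrder α] (x y : Fin n → α) : Prop :=
  ∃ i : Fin n, (∀ j : Fin n, j < i → sortDesc x j = sortDesc y j) ∧ sortDesc x i < sortDesc y i

/-- `x ≤_dec y` : lexicographic comparison of descending rearrangements. -/
noncomputable def decLE {n : ℕ} {α : Type*} [LinearOrder α] (x y : Fin n → α) : Prop :=
  sortDesc x = sortDesc y ∨ decLT x y

/-- `x` is a decreasingly minimal (dec-min) element of `S`. -/
noncomputable def DecMin {n : ℕ} (S : Set (Fin n → ℤ)) (x : Fin n → ℤ) : Prop :=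
  x ∈ S ∧ ∀ y ∈ S, decLE x y

/-- Embedding of integer vectors into real vectors. -/
def castVec {n : ℕ} (z : Fin n → ℤ) : Fin n → ℝ := fun i => (z i : ℝ)

/-- `S ⊆ ℤⁿ` is an integrally convex set: every point of `conv S` lies in the
convex hull of the points of `S` in its integral neighborhood. -/
def IntConvexSet {n : ℕ} (S : Set (Fin n → ℤ)) : Prop :=
  S.Nonempty ∧ ∀ x : Fin n → ℝ,
    x ∈ convexHull ℝ (castVec '' S) →
    x ∈ convexHull ℝ (castVec '' {z ∈ S | ∀ i, |x i - (z i : ℝ)| < 1})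

/-! ### Auxiliary lemmas about the rapidly increasing convex function `φ` -/

section PhiLemmas
variable {n : ℕ} {φ : ℤ → ℝ}

lemma slope_strictMono (hn : 2 ≤ n) (hpos : ∀ k : ℤ, 0 < φ k)
    (hrap : ∀ k : ℤ, (n : ℝ) * φ k ≤ φ (k + 1)) :
    StrictMono (fun k : ℤ => φ (k + 1) - φ k) := by
  apply strictMono_int_of_lt_succ
  intro k
  have h1 := hrap (k + 1)
  have h2 := hpos k
  have h3 := hpos (k + 1)
  have hn' : (2 : ℝ) ≤ (n : ℝ) := by exact_mod_cast hn
  show φ (k + 1) - φ k < φ (k + 1 + 1) - φ (k + 1)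
  nlinarith

lemma phi_strictMono (hn : 2 ≤ n) (hpos : ∀ k : ℤ, 0 < φ k)
    (hrap : ∀ k : ℤ, (n : ℝ) * φ k ≤ φ (k + 1)) : StrictMono φ := by
  apply strictMono_int_of_lt_succ
  intro k
  have h1 := hrap k
  have h2 := hpos k
  have hn' : (2 : ℝ) ≤ (n : ℝ) := by exact_mod_cast hn
  nlinarith

lemma chord_le_up (hs : StrictMono (fun k : ℤ => φ (k + 1) - φ k)) (u : ℤ) :
    ∀ t : ℤ, u ≤ t → φ u + (φ (u + 1) - φ u) * ((t : ℝ) - u) ≤ φ t := by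
  refine Int.le_induction ?_ ?_
  · norm_num
  · intro t ht ih
    have h1 : φ (u + 1) - φ u ≤ φ (t + 1) - φ t := hs.monotone ht
    push_cast
    push_cast at ih
    linarith

lemma chord_lt_down (hs : StrictMono (fun k : ℤ => φ (k + 1) - φ k)) (u : ℤ) :
    ∀ t : ℤ, t ≤ u - 1 → φ u + (φ (u + 1) - φ u) * ((t : ℝ) - u) < φ t := by
  refine Int.le_induction_down ?_ ?_
  · have h1 : φ (u - 1 + 1) - φ (u - 1) < φ (u + 1) - φ u := hs (by omega)
    have e : (u : ℤ) - 1 + 1 = u := by ring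
    rw [e] at h1
    push_cast
    linarith
  · intro t ht ih
    have h1 : φ (t - 1 + 1) - φ (t - 1) < φ (u + 1) - φ u := hs (by omega)
    have e : (t : ℤ) - 1 + 1 = t := by ring
    rw [e] at h1
    push_cast
    push_cast at ih
    linarith

lemma chord_le_all (hs : StrictMono (fun k : ℤ => φ (k + 1) - φ k)) (u t : ℤ) :
    φ u + (φ (u + 1) - φ u) * ((t : ℝ) - u) ≤ φ t := by
  rcases le_or_gt u t with h | h
  · exact chord_le_up hs u t h
  · exact (chord_lt_down hs u t (by omega)).le

end PhiLemmas

/-! ### Auxiliary lemmas about sorting and the dec-order -/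

section SortLemmas
variable {n : ℕ}

lemma sortDesc_antitone (x : Fin n → ℤ) : Antitone (sortDesc x) := by
  intro i j hij
  exact Tuple.monotone_sort (fun i => OrderDual.toDual (x i)) hij

lemma sum_comp_sortDesc (g : ℤ → ℝ) (x : Fin n → ℤ) :
    ∑ i, g (sortDesc x i) = ∑ i, g (x i) :=
  Equiv.sum_comp (Tuple.sort (fun i => OrderDual.toDual (x i))) (g ∘ x)

lemma decLT_asymm {x y : Fin n → ℤ} (h : decLT x y) : ¬ decLT y x := by
  rintro ⟨i', h1', h2'⟩
  obtain ⟨i, h1, h2⟩ := h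
  rcases lt_trichotomy i i' with hlt | heq | hgt
  · exact absurd (h1' i hlt).symm (ne_of_lt h2)
  · subst heq; exact absurd h2' (not_lt.2 h2.le)
  · exact absurd (h1 i' hgt) (ne_of_gt h2')

lemma decLT_trichotomy {x y : Fin n → ℤ} (h : sortDesc x ≠ sortDesc y) :
    decLT x y ∨ decLT y x := by
  have hne : (univ.filter (fun j : Fin n => sortDesc x j ≠ sortDesc y j)).Nonempty := by
    by_contra hc
    apply h
    funext j
    by_contra hj
    exact hc ⟨j, mem_filter.2 ⟨mem_univ j, hj⟩⟩
  set s := univ.filter (fun j : Fin n => sortDesc x j ≠ sortDesc y j) with hs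
  set i := s.min' hne with hi
  have hisme : sortDesc x i ≠ sortDesc y i := (mem_filter.1 (s.min'_mem hne)).2
  have hagree : ∀ j : Fin n, j < i → sortDesc x j = sortDesc y j := by
    intro j hj
    by_contra hjne
    exact absurd (s.min'_le j (mem_filter.2 ⟨mem_univ j, hjne⟩)) (not_le.2 hj)
  rcases lt_or_gt_of_ne hisme with hlt | hgt
  · exact Or.inl ⟨i, hagree, hlt⟩
  · exact Or.inr ⟨i, fun j hj => (hagree j hj).symm, hgt⟩

lemma decMin_sortDesc_eq {S : Set (Fin n → ℤ)} {x y : Fin n → ℤ}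
    (hx : DecMin S x) (hy : DecMin S y) : sortDesc x = sortDesc y := by
  rcases hx.2 y hy.1 with h | h
  · exact h
  · rcases hy.2 x hx.1 with h' | h'
    · exact h'.symm
    · exact absurd h' (decLT_asymm h)

end SortLemmas

/-! ### Strict monotonicity of `Φ` with respect to the dec-order -/

lemma Phi_lt_of_decLT {n : ℕ} {φ : ℤ → ℝ}
    (hpos : ∀ k : ℤ, 0 < φ k) (hsm : StrictMono φ)
    (hrap : ∀ k : ℤ, (n : ℝ) * φ k ≤ φ (k + 1))
    {x y : Fin n → ℤ} (h : decLT x y) :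
    ∑ i, φ (x i) < ∑ i, φ (y i) := by
  obtain ⟨i, hagree, hi⟩ := h
  rw [← sum_comp_sortDesc φ x, ← sum_comp_sortDesc φ y]
  set X := sortDesc x with hX
  set Y := sortDesc y with hY
  rw [← Finset.sum_filter_add_sum_filter_not univ (fun j => j < i) (fun j => φ (X j)),
      ← Finset.sum_filter_add_sum_filter_not univ (fun j => j < i) (fun j => φ (Y j))]
  have heq1 : ∑ j ∈ univ.filter (fun j => j < i), φ (X j)
      = ∑ j ∈ univ.filter (fun j => j < i), φ (Y j) :=
    Finset.sum_congr rfl (fun j hj => by rw [hagree j (mem_filter.1 hj).2])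
  rw [heq1]
  have hstrict : ∑ j ∈ univ.filter (fun j => ¬ j < i), φ (X j)
      < ∑ j ∈ univ.filter (fun j => ¬ j < i), φ (Y j) := by
    set A := univ.filter (fun j : Fin n => ¬ j < i) with hA
    have hiA : i ∈ A := mem_filter.2 ⟨mem_univ i, lt_irrefl i⟩
    have hle : ∀ j ∈ A, i ≤ j := fun j hj => not_lt.1 (mem_filter.1 hj).2
    have hsumX : φ (X i) + ∑ j ∈ A.erase i, φ (X j) = ∑ j ∈ A, φ (X j) :=
      Finset.add_sum_erase A (fun j => φ (X j)) hiA
    have hsumY : φ (Y i) + ∑ j ∈ A.erase i, φ (Y j) = ∑ j ∈ A, φ (Y j) :=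
      Finset.add_sum_erase A (fun j => φ (Y j)) hiA
    rcases (A.erase i).eq_empty_or_nonempty with hemp | hne
    · have hXY : φ (X i) < φ (Y i) := hsm hi
      rw [hemp] at hsumX hsumY
      simp at hsumX hsumY
      rw [← hsumX, ← hsumY]
      exact hXY
    · have h1 : ∑ j ∈ A.erase i, φ (X j) ≤ (A.erase i).card • φ (X i) :=
        Finset.sum_le_card_nsmul _ _ _ (fun j hj =>
          hsm.monotone (sortDesc_antitone x (hle j (Finset.mem_of_mem_erase hj))))
      have hcard : ((A.erase i).card : ℝ) + 1 ≤ (n : ℝ) := by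
        have h2 : (A.erase i).card + 1 = A.card := Finset.card_erase_add_one hiA
        have h3 : A.card ≤ n := by
          calc A.card ≤ Fintype.card (Fin n) := Finset.card_le_univ A
            _ = n := Fintype.card_fin n
        exact_mod_cast h2 ▸ h3
      have hposXi := hpos (X i)
      have h4 : ∑ j ∈ A.erase i, φ (X j) ≤ ((n : ℝ) - 1) * φ (X i) := by
        rw [nsmul_eq_mul] at h1
        nlinarith
      have h5 : (n : ℝ) * φ (X i) ≤ φ (X i + 1) := hrap (X i)
      have h6 : φ (X i + 1) ≤ φ (Y i) := hsm.monotone (by omega)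
      have h7 : (0 : ℝ) < ∑ j ∈ A.erase i, φ (Y j) :=
        Finset.sum_pos (fun j _ => hpos _) hne
      linarith
  linarith

lemma Phi_le_of_decLE {n : ℕ} {φ : ℤ → ℝ}
    (hpos : ∀ k : ℤ, 0 < φ k) (hsm : StrictMono φ)
    (hrap : ∀ k : ℤ, (n : ℝ) * φ k ≤ φ (k + 1))
    {x y : Fin n → ℤ} (h : decLE x y) :
    ∑ i, φ (x i) ≤ ∑ i, φ (y i) := by
  rcases h with h | h
  · rw [← sum_comp_sortDesc φ x, ← sum_comp_sortDesc φ y, h]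
  · exact (Phi_lt_of_decLT hpos hsm hrap h).le

lemma decMin_of_phi_le {n : ℕ} {φ : ℤ → ℝ} {S : Set (Fin n → ℤ)}
    (hpos : ∀ k : ℤ, 0 < φ k) (hsm : StrictMono φ)
    (hrap : ∀ k : ℤ, (n : ℝ) * φ k ≤ φ (k + 1))
    {w x : Fin n → ℤ} (hw : DecMin S w) (hxS : x ∈ S)
    (hle : ∑ i, φ (x i) ≤ ∑ i, φ (w i)) : DecMin S x := by
  have h1 : ∑ i, φ (w i) ≤ ∑ i, φ (x i) := Phi_le_of_decLE hpos hsm hrap (hw.2 x hxS)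
  have hsort : sortDesc x = sortDesc w := by
    by_contra hne
    rcases decLT_trichotomy hne with h | h
    · exact absurd (Phi_lt_of_decLT hpos hsm hrap h) (not_lt.2 h1)
    · exact absurd (Phi_lt_of_decLT hpos hsm hrap h) (not_lt.2 hle)
  refine ⟨hxS, fun z hz => ?_⟩
  rcases hw.2 z hz with h | h
  · exact Or.inl (hsort.trans h)
  · obtain ⟨i, h1', h2'⟩ := h
    exact Or.inr ⟨i, fun j hj => by rw [hsort]; exact h1' j hj, by rw [hsort]; exact h2'⟩

/-! ### Dec-min elements of an integrally convex set are close to each other -/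

lemma decmin_close {n : ℕ} (hn : 2 ≤ n) {S : Set (Fin n → ℤ)} (hS : IntConvexSet S)
    {φ : ℤ → ℝ} (hpos : ∀ k : ℤ, 0 < φ k)
    (hrap : ∀ k : ℤ, (n : ℝ) * φ k ≤ φ (k + 1))
    {x y : Fin n → ℤ} (hx : DecMin S x) (hy : DecMin S y) (i0 : Fin n) :
    |x i0 - y i0| ≤ 1 := by
  by_contra hcon
  have habs : 2 ≤ |x i0 - y i0| := by omega
  have hs := slope_strictMono hn hpos hrap
  have hsm := phi_strictMono hn hpos hrap
  obtain ⟨m, hm_def⟩ : ∃ m : Fin n → ℝ, m = fun i => ((x i : ℝ) + (y i : ℝ)) / 2 := ⟨_, rfl⟩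
  have hmi : ∀ i, m i = ((x i : ℝ) + (y i : ℝ)) / 2 := fun i => by rw [hm_def]
  have hxh : castVec x ∈ convexHull ℝ (castVec '' S) :=
    subset_convexHull ℝ _ ⟨x, hx.1, rfl⟩
  have hyh : castVec y ∈ convexHull ℝ (castVec '' S) :=
    subset_convexHull ℝ _ ⟨y, hy.1, rfl⟩
  have hmhull : m ∈ convexHull ℝ (castVec '' S) := by
    have hcc := (convex_convexHull ℝ (castVec '' S)) hxh hyh
      (by norm_num : (0:ℝ) ≤ 1/2) (by norm_num : (0:ℝ) ≤ 1/2) (by norm_num : (1:ℝ)/2 + 1/2 = 1)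
    convert hcc using 1
    funext i
    simp [castVec, hm_def]
    ring
  have hm2 := hS.2 m hmhull
  obtain ⟨u, hu⟩ : ∃ u : Fin n → ℤ, u = fun i => ⌊m i⌋ := ⟨_, rfl⟩
  have hui : ∀ i, u i = ⌊m i⌋ := fun i => by rw [hu]
  obtain ⟨c, hc⟩ : ∃ c : Fin n → ℝ, c = fun i => φ (u i + 1) - φ (u i) := ⟨_, rfl⟩
  have hci : ∀ i, c i = φ (u i + 1) - φ (u i) := fun i => by rw [hc]
  have hlin : IsLinearMap ℝ (fun v : Fin n → ℝ => ∑ i, c i * v i) := by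
    constructor
    · intro p q
      simp only [Pi.add_apply, mul_add]
      rw [Finset.sum_add_distrib]
    · intro r p
      simp only [Pi.smul_apply, smul_eq_mul, Finset.mul_sum]
      exact Finset.sum_congr rfl (fun i _ => by ring)
  have hsub : castVec '' {z ∈ S | ∀ i, |m i - (z i : ℝ)| < 1} ⊆
      {v : Fin n → ℝ | (∑ i, φ (x i)) - ∑ i, (φ (u i) - c i * (u i : ℝ)) ≤ ∑ i, c i * v i} := by
    rintro _ ⟨z, ⟨hzS, hz⟩, rfl⟩
    have hzrange : ∀ i, z i = u i ∨ z i = u i + 1 := by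
      intro i
      have h1 : (u i : ℝ) ≤ m i := by rw [hui i]; exact Int.floor_le _
      have h2 : m i < (u i : ℝ) + 1 := by rw [hui i]; exact Int.lt_floor_add_one _
      have h3 := abs_lt.1 (hz i)
      have h4 : ((u i - 1 : ℤ) : ℝ) < (z i : ℝ) := by push_cast; linarith
      have h5 : ((z i : ℤ) : ℝ) < ((u i + 2 : ℤ) : ℝ) := by push_cast; linarith
      have h4' : u i - 1 < z i := by exact_mod_cast h4
      have h5' : z i < u i + 2 := by exact_mod_cast h5
      omega
    have hterm : ∀ i, φ (z i) = c i * (z i : ℝ) + (φ (u i) - c i * (u i : ℝ)) := by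
      intro i
      rcases hzrange i with h | h <;> rw [h, hci i] <;> push_cast <;> ring
    have hPhi : (∑ i, φ (x i)) ≤ ∑ i, φ (z i) := Phi_le_of_decLE hpos hsm hrap (hx.2 z hzS)
    have hsum : ∑ i, φ (z i) = ∑ i, c i * (z i : ℝ) + ∑ i, (φ (u i) - c i * (u i : ℝ)) := by
      rw [← Finset.sum_add_distrib]
      exact Finset.sum_congr rfl (fun i _ => hterm i)
    simp only [Set.mem_setOf_eq, castVec]
    rw [hsum] at hPhi
    linarith
  have hmH := convexHull_min hsub (convex_halfSpace_ge hlin _) hm2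
  simp only [Set.mem_setOf_eq] at hmH
  have hchordx : ∀ i, φ (u i) + c i * ((x i : ℝ) - u i) ≤ φ (x i) :=
    fun i => by rw [hci i]; exact chord_le_all hs (u i) (x i)
  have hchordy : ∀ i, φ (u i) + c i * ((y i : ℝ) - u i) ≤ φ (y i) :=
    fun i => by rw [hci i]; exact chord_le_all hs (u i) (y i)
  have hfl : ∀ i, m i - 1 < (u i : ℝ) := by
    intro i
    rw [hui i]
    have := Int.lt_floor_add_one (m i)
    linarith
  have hstrict0 : φ (u i0) + c i0 * ((x i0 : ℝ) - u i0) < φ (x i0)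
      ∨ φ (u i0) + c i0 * ((y i0 : ℝ) - u i0) < φ (y i0) := by
    rcases le_or_gt (x i0) (y i0) with hxy | hxy
    · left
      have hd : x i0 + 2 ≤ y i0 := by rw [abs_le] at hcon; omega
      have hxr : (x i0 : ℝ) ≤ m i0 - 1 := by
        rw [hmi i0]; push_cast
        have hd' : (x i0 : ℝ) + 2 ≤ (y i0 : ℝ) := by exact_mod_cast hd
        linarith
      have hlt : (x i0 : ℝ) < (u i0 : ℝ) := lt_of_le_of_lt hxr (hfl i0)
      have hlt' : x i0 < u i0 := by exact_mod_cast hlt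
      rw [hci i0]
      exact chord_lt_down hs (u i0) (x i0) (by omega)
    · right
      have hd : y i0 + 2 ≤ x i0 := by rw [abs_le] at hcon; omega
      have hyr : (y i0 : ℝ) ≤ m i0 - 1 := by
        rw [hmi i0]; push_cast
        have hd' : (y i0 : ℝ) + 2 ≤ (x i0 : ℝ) := by exact_mod_cast hd
        linarith
      have hlt : (y i0 : ℝ) < (u i0 : ℝ) := lt_of_le_of_lt hyr (hfl i0)
      have hlt' : y i0 < u i0 := by exact_mod_cast hlt
      rw [hci i0]
      exact chord_lt_down hs (u i0) (y i0) (by omega)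
  have hyeqx : ∑ i, φ (y i) = ∑ i, φ (x i) := by
    rw [← sum_comp_sortDesc φ y, ← sum_comp_sortDesc φ x, decMin_sortDesc_eq hy hx]
  have hmain : ∑ i, (c i * m i + (φ (u i) - c i * (u i : ℝ)))
      < ∑ i, (φ (x i) + φ (y i)) / 2 := by
    refine Finset.sum_lt_sum (fun i _ => ?_) ⟨i0, mem_univ i0, ?_⟩
    · have h1 := hchordx i
      have h2 := hchordy i
      rw [hmi i]
      nlinarith [h1, h2]
    · rw [hmi i0]
      rcases hstrict0 with h | h
      · have h2 := hchordy i0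
        nlinarith [h, h2]
      · have h1 := hchordx i0
        nlinarith [h, h1]
  have hhalf : ∑ i, (φ (x i) + φ (y i)) / 2 = ∑ i, φ (x i) := by
    rw [← Finset.sum_div, Finset.sum_add_distrib, hyeqx]
    ring
  have hsplit : ∑ i, (c i * m i + (φ (u i) - c i * (u i : ℝ)))
      = ∑ i, c i * m i + ∑ i, (φ (u i) - c i * (u i : ℝ)) := Finset.sum_add_distrib
  rw [hsplit, hhalf] at hmain
  linarith

theorem decmin_eq_argmin_on_box (n : ℕ) (hn : 2 ≤ n) (S : Set (Fin n → ℤ))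
    (hS : IntConvexSet S) (hdm : ∃ w, DecMin S w)
    (φ : ℤ → ℝ)
    (hpos : ∀ k : ℤ, 0 < φ k)
    (hconv : ∀ k : ℤ, 2 * φ k ≤ φ (k - 1) + φ (k + 1))
    (hrap : ∀ k : ℤ, (n : ℝ) * φ k ≤ φ (k + 1))
    (a b : Fin n → ℤ)
    (hbox : ∀ x, DecMin S x → ∀ i, a i ≤ x i ∧ x i ≤ b i)
    (ha : ∀ i, ∃ x, DecMin S x ∧ x i = a i)
    (hb : ∀ i, ∃ x, DecMin S x ∧ x i = b i)
    (p : Fin n → ℝ) (hp : ∀ i, p i = φ (a i + 1) - φ (a i)) :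
    {x | DecMin S x} =
      {y ∈ S | (∀ i, a i ≤ y i ∧ y i ≤ b i) ∧
        ∀ y' ∈ S, (∀ i, a i ≤ y' i ∧ y' i ≤ b i) →
          ∑ i, p i * (y i : ℝ) ≤ ∑ i, p i * (y' i : ℝ)} := by
  have hsm := phi_strictMono hn hpos hrap
  obtain ⟨w, hw⟩ := hdm
  have hba : ∀ i, b i ≤ a i + 1 := by
    intro i
    obtain ⟨xa, hxa, hxai⟩ := ha i
    obtain ⟨xb, hxb, hxbi⟩ := hb i
    have hcl := decmin_close hn hS hpos hrap hxa hxb i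
    rw [hxai, hxbi, abs_le] at hcl
    omega
  have hsum : ∀ y : Fin n → ℤ, (∀ i, a i ≤ y i ∧ y i ≤ b i) →
      ∑ i, φ (y i) = ∑ i, p i * (y i : ℝ) + ∑ i, (φ (a i) - p i * (a i : ℝ)) := by
    intro y hy
    rw [← Finset.sum_add_distrib]
    refine Finset.sum_congr rfl (fun i _ => ?_)
    have h1 := hy i
    have h2 := hba i
    have hcase : y i = a i ∨ y i = a i + 1 := by omega
    rcases hcase with h | h <;> rw [h, hp i] <;> push_cast <;> ring
  ext y
  simp only [Set.mem_setOf_eq]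
  constructor
  · intro hy
    refine ⟨hy.1, hbox y hy, fun y' hy'S hy'box => ?_⟩
    have hphi : ∑ i, φ (y i) ≤ ∑ i, φ (y' i) :=
      Phi_le_of_decLE hpos hsm hrap (hy.2 y' hy'S)
    have e1 := hsum y (hbox y hy)
    have e2 := hsum y' hy'box
    linarith
  · rintro ⟨hyS, hybox, hymin⟩
    have hwbox := hbox w hw
    have hpw := hymin w hw.1 hwbox
    have e1 := hsum y hybox
    have e2 := hsum w hwbox
    have hphi : ∑ i, φ (y i) ≤ ∑ i, φ (w i) := by linarith
    exact decMin_of_phi_le hpos hsm hrap hw hyS hphi
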